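/- arXiv:2306.16147 — 9 statements merged into one kernel-verified Lean document; each statement's English description precedes it below -/
import Mathlib

section
/- Let k, l be nonzero integers. The set B_{k,l}^× of matrices in B_{k,l} with determinant ±1 is contained in SL_2(ℤ) if and only if there is no integer a with a² ≡ -1 mod k. -/
/-!
A matrix `!![x, b; c, y]` of `B_{k,l}` with determinant `-1` gives `x² + 1 ≡ x y - b c ≡ 0 mod k`,
since `y ≡ x` and `c ≡ 0 mod k`. Conversely, from `a² ≡ -1 mod k` lift `a` to some
`x ≡ a mod k` prime to `k l` (surjectivity of `(ℤ/klℤ)ˣ → (ℤ/kℤ)ˣ`) and write `u x + v k l = 1`.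
Then `!![x, l v; k, -u]` has determinant `-1`, and `x (x + u) ≡ x² + 1 ≡ 0 mod k` with `x` a unit
mod `k` forces `-u ≡ x mod k`.
-/

/-- Membership in `B_{k,l}`. -/
def Bmem (k l : ℤ) (M : Matrix (Fin 2) (Fin 2) ℤ) : Prop :=
  k ∣ (M 0 0 - M 1 1) ∧ k ∣ M 1 0 ∧ l ∣ M 0 1

theorem Int.isCoprime_natAbs_right_iff {x n : ℤ} : IsCoprime x (n.natAbs : ℤ) ↔ IsCoprime x n := by
  simp [Int.isCoprime_iff_gcd_eq_one, Int.gcd, Int.natAbs_abs]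

theorem Int.exists_modEq_isCoprime {k n : ℤ} (hn : n ≠ 0) (hkn : k ∣ n) {a : ℤ}
    (ha : IsCoprime a k) : ∃ x : ℤ, x ≡ a [ZMOD k] ∧ IsCoprime x n := by
  have : NeZero n.natAbs := ⟨Int.natAbs_ne_zero.mpr hn⟩
  have hkn' : k.natAbs ∣ n.natAbs := Int.natAbs_dvd_natAbs.mpr hkn
  rw [← Int.isCoprime_natAbs_right_iff] at ha
  obtain ⟨u, hu⟩ := ZMod.unitsMap_surjective hkn' (ZMod.unitOfIsCoprime a ha)
  refine ⟨ZMod.cast (u : ZMod n.natAbs), ?_, ?_⟩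
  · rw [← Int.modEq_natAbs, ← ZMod.intCast_eq_intCast_iff, ZMod.intCast_cast,
      ← ZMod.unitsMap_val hkn', hu, ZMod.coe_unitOfIsCoprime]
  · rw [← Int.isCoprime_natAbs_right_iff, isCoprime_comm, ← ZMod.coe_int_isUnit_iff_isCoprime,
      ZMod.intCast_zmod_cast]
    exact u.isUnit

theorem dvd_sq_add_one_of_bmem_of_det_eq_neg_one {k l : ℤ} {M : Matrix (Fin 2) (Fin 2) ℤ}
    (hM : Bmem k l M) (hdet : M.det = -1) : k ∣ M 0 0 ^ 2 + 1 := by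
  obtain ⟨⟨s, hs⟩, ⟨r, hr⟩, -⟩ := hM
  rw [Matrix.det_fin_two] at hdet
  exact ⟨M 0 0 * s + M 0 1 * r, by linear_combination M 0 0 * hs + M 0 1 * hr + hdet⟩

theorem exists_bmem_det_eq_neg_one_of_isCoprime {k l x : ℤ} (hx : k ∣ x ^ 2 + 1)
    (hcop : IsCoprime x (k * l)) : ∃ M, Bmem k l M ∧ M.det = -1 := by
  obtain ⟨u, v, huv⟩ := hcop
  obtain ⟨m, hm⟩ := hx
  have hkx : IsCoprime k x := ⟨v * l, u, by linear_combination huv⟩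
  have hdiag : k ∣ x - -u :=
    hkx.dvd_of_dvd_mul_right ⟨m - v * l, by linear_combination hm + huv⟩
  refine ⟨!![x, l * v; k, -u], ⟨hdiag, dvd_rfl, dvd_mul_right l v⟩, ?_⟩
  rw [Matrix.det_fin_two_of]
  linear_combination -huv

theorem exists_bmem_det_eq_neg_one {k l a : ℤ} (hl : l ≠ 0) (ha : k ∣ a ^ 2 + 1) :
    ∃ M, Bmem k l M ∧ M.det = -1 := by
  have hk : k ≠ 0 := by
    rintro rfl
    exact (by positivity : 0 < a ^ 2 + 1).ne' (zero_dvd_iff.mp ha)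
  have hak : IsCoprime a k := by
    obtain ⟨m, hm⟩ := ha
    exact ⟨-a, m, by linear_combination -hm⟩
  obtain ⟨x, hxa, hx⟩ := Int.exists_modEq_isCoprime (mul_ne_zero hk hl) (dvd_mul_right k l) hak
  have hxk : k ∣ x ^ 2 + 1 := ((hxa.pow 2).add_right 1).dvd_iff.mpr ha
  exact exists_bmem_det_eq_neg_one_of_isCoprime hxk hx

theorem stmt_1_general (k l : ℤ) (hl : l ≠ 0) :
    (∀ M : Matrix (Fin 2) (Fin 2) ℤ, Bmem k l M →
      (M.det = 1 ∨ M.det = -1) → M.det = 1) ↔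
    ¬ ∃ a : ℤ, k ∣ (a ^ 2 + 1) := by
  constructor
  · rintro H ⟨a, ha⟩
    obtain ⟨M, hM, hdet⟩ := exists_bmem_det_eq_neg_one hl ha
    have := H M hM (Or.inr hdet)
    omega
  · rintro hne M hM (hdet | hdet)
    · exact hdet
    · exact absurd ⟨M 0 0, dvd_sq_add_one_of_bmem_of_det_eq_neg_one hM hdet⟩ hne

/-- `B_{k,l}^× ⊆ SL_2(ℤ)` iff there is no integer `a` with `a² ≡ -1 mod k`. -/
theorem stmt_1 (k l : ℤ) (hk : k ≠ 0) (hl : l ≠ 0) :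
    (∀ M : Matrix (Fin 2) (Fin 2) ℤ, Bmem k l M →
      (M.det = 1 ∨ M.det = -1) → M.det = 1) ↔
    ¬ ∃ a : ℤ, k ∣ (a ^ 2 + 1) :=
  stmt_1_general k l hl
end

section
/- Let k and λ be nonzero integers. For a quadratic-form-valued lattice L and nonzero integer μ, define L_μ := { v ∈ L | ⟨v, w⟩ ∈ μℤ for all w ∈ L }. For L = U(κ) ⊕ ⟨λ⟩ with gcd(κ,λ) = 1, the sublattice L_κ is isometric to (U ⊕ ⟨κλ⟩)(κ), and consequently any isometry of L ⊗ ℚ preserving L also preserves L_κ; this yields a group isomorphism O(U(κ) ⊕ ⟨λ⟩) ≅ O(U ⊕ ⟨κλ⟩) as subgroups of the orthogonal group of the rational quadratic space. -/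
open Matrix

lemma matIsomUnit3 {Q g : Matrix (Fin 3) (Fin 3) ℚ} (hQ : Q.det ≠ 0)
    (h : gᵀ * Q * g = Q) : IsUnit g.det := by
  have h2 := congrArg Matrix.det h
  rw [Matrix.det_mul, Matrix.det_mul, Matrix.det_transpose] at h2
  have : g.det * g.det = 1 := mul_right_cancel₀ hQ (by linear_combination h2)
  exact IsUnit.of_mul_eq_one _ this

lemma matConjIsom3 (Q1 Q2 P Pi : Matrix (Fin 3) (Fin 3) ℚ) (a : ℚ)
    (hPPi : P * Pi = 1) (hQ2 : Q2 = a • (Pᵀ * Q1 * P))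
    (g : Matrix (Fin 3) (Fin 3) ℚ) (hg : gᵀ * Q1 * g = Q1) :
    (Pi * g * P)ᵀ * Q2 * (Pi * g * P) = Q2 := by
  subst hQ2
  rw [Matrix.mul_smul, Matrix.smul_mul]
  congr 1
  have h1 : Piᵀ * Pᵀ = 1 := by rw [← transpose_mul, hPPi, transpose_one]
  simp only [transpose_mul, Matrix.mul_assoc]
  rw [← Matrix.mul_assoc Piᵀ Pᵀ, h1, one_mul, ← Matrix.mul_assoc P Pi, hPPi, one_mul,
    ← Matrix.mul_assoc Q1 g P, ← Matrix.mul_assoc gᵀ (Q1*g) P, ← Matrix.mul_assoc gᵀ Q1 g, hg]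

lemma matConjInv3 (P Pi g : Matrix (Fin 3) (Fin 3) ℚ) (hPPi : P * Pi = 1) (hPiP : Pi * P = 1)
    (hg : IsUnit g.det) : (Pi * g * P)⁻¹ = Pi * g⁻¹ * P := by
  apply Matrix.inv_eq_right_inv
  simp only [Matrix.mul_assoc]
  rw [← Matrix.mul_assoc P Pi (g⁻¹ * P), hPPi, one_mul,
    ← Matrix.mul_assoc g g⁻¹ P, Matrix.mul_nonsing_inv _ hg, one_mul, hPiP]

lemma matIsomRel3 {Q g : Matrix (Fin 3) (Fin 3) ℚ} (hgu : IsUnit g.det)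
    (h : gᵀ * Q * g = Q) : Q * g = (g⁻¹)ᵀ * Q ∧ Q * g⁻¹ = gᵀ * Q := by
  constructor
  · have h2 : (g⁻¹)ᵀ * (gᵀ * Q * g) = (g⁻¹)ᵀ * Q := by rw [h]
    rw [← Matrix.mul_assoc, ← Matrix.mul_assoc, ← transpose_mul,
      Matrix.mul_nonsing_inv _ hgu, transpose_one, one_mul] at h2
    exact h2
  · have h2 : (gᵀ * Q * g) * g⁻¹ = Q * g⁻¹ := by rw [h]
    rw [Matrix.mul_assoc, Matrix.mul_nonsing_inv _ hgu, Matrix.mul_one] at h2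
    exact h2.symm

/-- `g` is an isometry of the lattice `ℤ³ ⊂ ℚ³` with Gram matrix `Q`:
`g` and `g⁻¹ ` have integer entries and `g` preserves the bilinear form. -/
def IsIntegralIsometry (Q g : Matrix (Fin 3) (Fin 3) ℚ) : Prop :=
  (∃ h : Matrix (Fin 3) (Fin 3) ℤ, h.map (Int.cast : ℤ → ℚ) = g) ∧
  (∃ h : Matrix (Fin 3) (Fin 3) ℤ, h.map (Int.cast : ℤ → ℚ) = g⁻¹) ∧
  gᵀ * Q * g = Q

set_option maxHeartbeats 2000000 in
/-- For coprime nonzero `κ, λ` and `L = U(κ) ⊕ ⟨λ⟩`: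
the sublattice `L_κ = { v ∈ L | ⟨v, L⟩ ⊆ κℤ }` has a basis `B` with Gram matrix
`κ` times that of `U ⊕ ⟨κλ⟩`, i.e. `L_κ ≅ (U ⊕ ⟨κλ⟩)(κ)`; and there is a rational
base change `P` conjugating the integral orthogonal group of `U(κ) ⊕ ⟨λ⟩` onto that
of `U ⊕ ⟨κλ⟩`, giving `O(U(κ) ⊕ ⟨λ⟩) ≅ O(U ⊕ ⟨κλ⟩)` inside the rational orthogonal
group. -/
theorem stmt_4 (κ lam : ℤ) (hκ : κ ≠ 0) (hlam : lam ≠ 0) (hcop : IsCoprime κ lam) :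
    (∃ B : Matrix (Fin 3) (Fin 3) ℤ,
      (∀ v : Fin 3 → ℤ,
        (∀ w : Fin 3 → ℤ, κ ∣ v ⬝ᵥ ((!![0, κ, 0; κ, 0, 0; 0, 0, lam]).mulVec w)) ↔
        ∃ c : Fin 3 → ℤ, v = B.mulVec c) ∧
      Bᵀ * !![0, κ, 0; κ, 0, 0; 0, 0, lam] * B =
        κ • !![0, 1, 0; 1, 0, 0; 0, 0, κ * lam]) ∧
    (∃ P : Matrix (Fin 3) (Fin 3) ℚ, IsUnit P.det ∧
      ∀ g : Matrix (Fin 3) (Fin 3) ℚ,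
        IsIntegralIsometry !![0, (κ : ℚ), 0; (κ : ℚ), 0, 0; 0, 0, (lam : ℚ)] g ↔
        IsIntegralIsometry !![0, 1, 0; 1, 0, 0; 0, 0, ((κ : ℚ) * (lam : ℚ))]
          (P⁻¹ * g * P)) := by
  constructor
  · refine ⟨!![1,0,0;0,1,0;0,0,κ], fun v => ⟨fun hv => ?_, ?_⟩, ?_⟩
    · have h2 := hv ![0,0,1]
      simp [mulVec, dotProduct, Fin.sum_univ_three] at h2
      have : κ ∣ v 2 := hcop.dvd_of_dvd_mul_right (by simpa [mul_comm] using h2)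
      obtain ⟨c2, hc2⟩ := this
      refine ⟨![v 0, v 1, c2], ?_⟩
      funext i
      fin_cases i <;> simp [mulVec, dotProduct, Fin.sum_univ_three, hc2]
    · rintro ⟨c, rfl⟩ w
      refine ⟨c 0 * w 1 + c 1 * w 0 + c 2 * (lam * w 2), ?_⟩
      simp [mulVec, dotProduct, Fin.sum_univ_three, Matrix.vecHead, Matrix.vecTail]
      ring
    · ext i j
      fin_cases i <;> fin_cases j <;>
        simp [Matrix.mul_apply, Fin.sum_univ_three, Matrix.vecHead, Matrix.vecTail] <;> ring
  · have ha : (κ : ℚ) ≠ 0 := Int.cast_ne_zero.mpr hκ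
    have hb : (lam : ℚ) ≠ 0 := Int.cast_ne_zero.mpr hlam
    have hPPi : (!![1, 0, 0; 0, 1, 0; 0, 0, (κ:ℚ)] : Matrix (Fin 3) (Fin 3) ℚ) * !![1, 0, 0; 0, 1, 0; 0, 0, ((κ:ℚ))⁻¹] = 1 := by
      ext i j
      fin_cases i <;> fin_cases j <;> simp [Matrix.mul_apply, Matrix.map_apply, Fin.sum_univ_three, Matrix.one_apply, Matrix.vecHead, Matrix.vecTail, Matrix.vecMul, Matrix.mulVec, dotProduct] <;> first | rfl | field_simp
    have hPiP : (!![1, 0, 0; 0, 1, 0; 0, 0, ((κ:ℚ))⁻¹] : Matrix (Fin 3) (Fin 3) ℚ) * !![1, 0, 0; 0, 1, 0; 0, 0, (κ:ℚ)] = 1 := by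
      ext i j
      fin_cases i <;> fin_cases j <;> simp [Matrix.mul_apply, Matrix.map_apply, Fin.sum_univ_three, Matrix.one_apply, Matrix.vecHead, Matrix.vecTail, Matrix.vecMul, Matrix.mulVec, dotProduct] <;> first | rfl | field_simp
    have hPinv : (!![1, 0, 0; 0, 1, 0; 0, 0, (κ:ℚ)] : Matrix (Fin 3) (Fin 3) ℚ)⁻¹ = !![1, 0, 0; 0, 1, 0; 0, 0, ((κ:ℚ))⁻¹] := Matrix.inv_eq_right_inv hPPi
    have hPunit : IsUnit (!![1, 0, 0; 0, 1, 0; 0, 0, (κ:ℚ)] : Matrix (Fin 3) (Fin 3) ℚ).det := by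
      have : (!![1, 0, 0; 0, 1, 0; 0, 0, (κ:ℚ)] : Matrix (Fin 3) (Fin 3) ℚ).det = (κ:ℚ) := by
        simp [Matrix.det_fin_three, Matrix.vecHead, Matrix.vecTail]
      rw [this]
      exact isUnit_iff_ne_zero.mpr ha
    have hQ1det : (!![0, (κ:ℚ), 0; (κ:ℚ), 0, 0; 0, 0, (lam:ℚ)] : Matrix (Fin 3) (Fin 3) ℚ).det ≠ 0 := by
      have : (!![0, (κ:ℚ), 0; (κ:ℚ), 0, 0; 0, 0, (lam:ℚ)] : Matrix (Fin 3) (Fin 3) ℚ).det = -((κ:ℚ) * (κ:ℚ) * (lam:ℚ)) := by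
        simp [Matrix.det_fin_three, Matrix.vecHead, Matrix.vecTail]
      rw [this]
      simp [ha, hb]
    have hQ2det : (!![0, 1, 0; 1, 0, 0; 0, 0, ((κ:ℚ) * (lam:ℚ))] : Matrix (Fin 3) (Fin 3) ℚ).det ≠ 0 := by
      have : (!![0, 1, 0; 1, 0, 0; 0, 0, ((κ:ℚ) * (lam:ℚ))] : Matrix (Fin 3) (Fin 3) ℚ).det = -((κ:ℚ) * (lam:ℚ)) := by
        simp [Matrix.det_fin_three, Matrix.vecHead, Matrix.vecTail]
      rw [this]
      simp [ha, hb]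
    have hQ2eq : (!![0, 1, 0; 1, 0, 0; 0, 0, ((κ:ℚ) * (lam:ℚ))] : Matrix (Fin 3) (Fin 3) ℚ) = ((κ:ℚ))⁻¹ • ((!![1, 0, 0; 0, 1, 0; 0, 0, (κ:ℚ)] : Matrix (Fin 3) (Fin 3) ℚ)ᵀ * !![0, (κ:ℚ), 0; (κ:ℚ), 0, 0; 0, 0, (lam:ℚ)] * !![1, 0, 0; 0, 1, 0; 0, 0, (κ:ℚ)]) := by
      ext i j
      fin_cases i <;> fin_cases j <;> simp [Matrix.mul_apply, Matrix.map_apply, Fin.sum_univ_three, Matrix.one_apply, Matrix.vecHead, Matrix.vecTail, Matrix.vecMul, Matrix.mulVec, dotProduct] <;> first | rfl | ring1 | (field_simp; try ring1)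
    have hQ1eq : (!![0, (κ:ℚ), 0; (κ:ℚ), 0, 0; 0, 0, (lam:ℚ)] : Matrix (Fin 3) (Fin 3) ℚ) = (κ:ℚ) • ((!![1, 0, 0; 0, 1, 0; 0, 0, ((κ:ℚ))⁻¹] : Matrix (Fin 3) (Fin 3) ℚ)ᵀ * !![0, 1, 0; 1, 0, 0; 0, 0, ((κ:ℚ) * (lam:ℚ))] * !![1, 0, 0; 0, 1, 0; 0, 0, ((κ:ℚ))⁻¹]) := by
      ext i j
      fin_cases i <;> fin_cases j <;> simp [Matrix.mul_apply, Matrix.map_apply, Fin.sum_univ_three, Matrix.one_apply, Matrix.vecHead, Matrix.vecTail, Matrix.vecMul, Matrix.mulVec, dotProduct] <;> first | rfl | ring1 | (field_simp; try ring1)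
    refine ⟨!![1, 0, 0; 0, 1, 0; 0, 0, (κ:ℚ)], hPunit, fun g => ⟨?_, ?_⟩⟩
    · rintro ⟨⟨h, hh⟩, ⟨k, hk⟩, hQ⟩
      have hgu : IsUnit g.det := matIsomUnit3 hQ1det hQ
      obtain ⟨hrel, hrel2⟩ := matIsomRel3 hgu hQ
      have e20 : ((!![0, (κ:ℚ), 0; (κ:ℚ), 0, 0; 0, 0, (lam:ℚ)] : Matrix (Fin 3) (Fin 3) ℚ) * g) 2 0 = ((g⁻¹)ᵀ * !![0, (κ:ℚ), 0; (κ:ℚ), 0, 0; 0, 0, (lam:ℚ)]) 2 0 := by rw [hrel]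
      have e21 : ((!![0, (κ:ℚ), 0; (κ:ℚ), 0, 0; 0, 0, (lam:ℚ)] : Matrix (Fin 3) (Fin 3) ℚ) * g) 2 1 = ((g⁻¹)ᵀ * !![0, (κ:ℚ), 0; (κ:ℚ), 0, 0; 0, 0, (lam:ℚ)]) 2 1 := by rw [hrel]
      have f20 : ((!![0, (κ:ℚ), 0; (κ:ℚ), 0, 0; 0, 0, (lam:ℚ)] : Matrix (Fin 3) (Fin 3) ℚ) * g⁻¹) 2 0 = (gᵀ * !![0, (κ:ℚ), 0; (κ:ℚ), 0, 0; 0, 0, (lam:ℚ)]) 2 0 := by rw [hrel2]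
      have f21 : ((!![0, (κ:ℚ), 0; (κ:ℚ), 0, 0; 0, 0, (lam:ℚ)] : Matrix (Fin 3) (Fin 3) ℚ) * g⁻¹) 2 1 = (gᵀ * !![0, (κ:ℚ), 0; (κ:ℚ), 0, 0; 0, 0, (lam:ℚ)]) 2 1 := by rw [hrel2]
      rw [← hk] at e20 e21 f20 f21
      rw [← hh] at e20 e21 f20 f21
      simp [Matrix.mul_apply, Matrix.map_apply, Fin.sum_univ_three, Matrix.one_apply, Matrix.vecHead, Matrix.vecTail, Matrix.vecMul, Matrix.mulVec, dotProduct] at e20 e21 f20 f21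
      have d20 : κ ∣ h 2 0 := by
        apply hcop.dvd_of_dvd_mul_right
        refine ⟨k 1 2, ?_⟩
        have : ((h 2 0 * lam : ℤ) : ℚ) = ((κ * k 1 2 : ℤ) : ℚ) := by push_cast; linear_combination e20
        exact_mod_cast this
      have d21 : κ ∣ h 2 1 := by
        apply hcop.dvd_of_dvd_mul_right
        refine ⟨k 0 2, ?_⟩
        have : ((h 2 1 * lam : ℤ) : ℚ) = ((κ * k 0 2 : ℤ) : ℚ) := by push_cast; linear_combination e21
        exact_mod_cast this
      have dk20 : κ ∣ k 2 0 := by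
        apply hcop.dvd_of_dvd_mul_right
        refine ⟨h 1 2, ?_⟩
        have : ((k 2 0 * lam : ℤ) : ℚ) = ((κ * h 1 2 : ℤ) : ℚ) := by push_cast; linear_combination f20
        exact_mod_cast this
      have dk21 : κ ∣ k 2 1 := by
        apply hcop.dvd_of_dvd_mul_right
        refine ⟨h 0 2, ?_⟩
        have : ((k 2 1 * lam : ℤ) : ℚ) = ((κ * h 0 2 : ℤ) : ℚ) := by push_cast; linear_combination f21
        exact_mod_cast this
      obtain ⟨p0, hp0⟩ := d20
      obtain ⟨p1, hp1⟩ := d21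
      obtain ⟨q0, hq0⟩ := dk20
      obtain ⟨q1, hq1⟩ := dk21
      have hconj := matConjInv3 !![1, 0, 0; 0, 1, 0; 0, 0, (κ:ℚ)] !![1, 0, 0; 0, 1, 0; 0, 0, ((κ:ℚ))⁻¹] g hPPi hPiP hgu
      refine ⟨⟨!![h 0 0, h 0 1, κ * h 0 2; h 1 0, h 1 1, κ * h 1 2; p0, p1, h 2 2], ?_⟩,
              ⟨!![k 0 0, k 0 1, κ * k 0 2; k 1 0, k 1 1, κ * k 1 2; q0, q1, k 2 2], ?_⟩, ?_⟩
      · rw [hPinv, ← hh]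
        ext i j
        fin_cases i <;> fin_cases j <;> simp [Matrix.mul_apply, Matrix.map_apply, Fin.sum_univ_three, Matrix.one_apply, Matrix.vecHead, Matrix.vecTail, Matrix.vecMul, Matrix.mulVec, dotProduct] <;>
          push_cast [hp0, hp1] <;> first | rfl | ring1 | (field_simp; try ring1)
      · rw [hPinv, hconj, ← hk]
        ext i j
        fin_cases i <;> fin_cases j <;> simp [Matrix.mul_apply, Matrix.map_apply, Fin.sum_univ_three, Matrix.one_apply, Matrix.vecHead, Matrix.vecTail, Matrix.vecMul, Matrix.mulVec, dotProduct] <;>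
          push_cast [hq0, hq1] <;> first | rfl | ring1 | (field_simp; try ring1)
      · rw [hPinv]
        exact matConjIsom3 !![0, (κ:ℚ), 0; (κ:ℚ), 0, 0; 0, 0, (lam:ℚ)] !![0, 1, 0; 1, 0, 0; 0, 0, ((κ:ℚ) * (lam:ℚ))] !![1, 0, 0; 0, 1, 0; 0, 0, (κ:ℚ)] !![1, 0, 0; 0, 1, 0; 0, 0, ((κ:ℚ))⁻¹] ((κ:ℚ))⁻¹ hPPi hQ2eq g hQ
    · rintro ⟨⟨h, hh⟩, ⟨k, hk⟩, hQ⟩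
      rw [hPinv] at hh hk hQ
      have hgu' : IsUnit ((!![1, 0, 0; 0, 1, 0; 0, 0, ((κ:ℚ))⁻¹] : Matrix (Fin 3) (Fin 3) ℚ) * g * !![1, 0, 0; 0, 1, 0; 0, 0, (κ:ℚ)]).det := matIsomUnit3 hQ2det hQ
      obtain ⟨hrel, hrel2⟩ := matIsomRel3 hgu' hQ
      have e02 : ((!![0, 1, 0; 1, 0, 0; 0, 0, ((κ:ℚ) * (lam:ℚ))] : Matrix (Fin 3) (Fin 3) ℚ) * (!![1, 0, 0; 0, 1, 0; 0, 0, ((κ:ℚ))⁻¹] * g * !![1, 0, 0; 0, 1, 0; 0, 0, (κ:ℚ)])) 0 2 = (((!![1, 0, 0; 0, 1, 0; 0, 0, ((κ:ℚ))⁻¹] * g * !![1, 0, 0; 0, 1, 0; 0, 0, (κ:ℚ)])⁻¹)ᵀ * !![0, 1, 0; 1, 0, 0; 0, 0, ((κ:ℚ) * (lam:ℚ))]) 0 2 := by rw [hrel]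
      have e12 : ((!![0, 1, 0; 1, 0, 0; 0, 0, ((κ:ℚ) * (lam:ℚ))] : Matrix (Fin 3) (Fin 3) ℚ) * (!![1, 0, 0; 0, 1, 0; 0, 0, ((κ:ℚ))⁻¹] * g * !![1, 0, 0; 0, 1, 0; 0, 0, (κ:ℚ)])) 1 2 = (((!![1, 0, 0; 0, 1, 0; 0, 0, ((κ:ℚ))⁻¹] * g * !![1, 0, 0; 0, 1, 0; 0, 0, (κ:ℚ)])⁻¹)ᵀ * !![0, 1, 0; 1, 0, 0; 0, 0, ((κ:ℚ) * (lam:ℚ))]) 1 2 := by rw [hrel]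
      have f02 : ((!![0, 1, 0; 1, 0, 0; 0, 0, ((κ:ℚ) * (lam:ℚ))] : Matrix (Fin 3) (Fin 3) ℚ) * (!![1, 0, 0; 0, 1, 0; 0, 0, ((κ:ℚ))⁻¹] * g * !![1, 0, 0; 0, 1, 0; 0, 0, (κ:ℚ)])⁻¹) 0 2 = ((!![1, 0, 0; 0, 1, 0; 0, 0, ((κ:ℚ))⁻¹] * g * !![1, 0, 0; 0, 1, 0; 0, 0, (κ:ℚ)])ᵀ * !![0, 1, 0; 1, 0, 0; 0, 0, ((κ:ℚ) * (lam:ℚ))]) 0 2 := by rw [hrel2]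
      have f12 : ((!![0, 1, 0; 1, 0, 0; 0, 0, ((κ:ℚ) * (lam:ℚ))] : Matrix (Fin 3) (Fin 3) ℚ) * (!![1, 0, 0; 0, 1, 0; 0, 0, ((κ:ℚ))⁻¹] * g * !![1, 0, 0; 0, 1, 0; 0, 0, (κ:ℚ)])⁻¹) 1 2 = ((!![1, 0, 0; 0, 1, 0; 0, 0, ((κ:ℚ))⁻¹] * g * !![1, 0, 0; 0, 1, 0; 0, 0, (κ:ℚ)])ᵀ * !![0, 1, 0; 1, 0, 0; 0, 0, ((κ:ℚ) * (lam:ℚ))]) 1 2 := by rw [hrel2]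
      rw [← hk] at e02 e12 f02 f12
      rw [← hh] at e02 e12 f02 f12
      simp [Matrix.mul_apply, Matrix.map_apply, Fin.sum_univ_three, Matrix.one_apply, Matrix.vecHead, Matrix.vecTail, Matrix.vecMul, Matrix.mulVec, dotProduct] at e02 e12 f02 f12
      have d12 : κ ∣ h 1 2 := by
        refine ⟨k 2 0 * lam, ?_⟩
        have : ((h 1 2 : ℤ) : ℚ) = ((κ * (k 2 0 * lam) : ℤ) : ℚ) := by push_cast; linear_combination e02
        exact_mod_cast this
      have d02 : κ ∣ h 0 2 := by
        refine ⟨k 2 1 * lam, ?_⟩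
        have : ((h 0 2 : ℤ) : ℚ) = ((κ * (k 2 1 * lam) : ℤ) : ℚ) := by push_cast; linear_combination e12
        exact_mod_cast this
      have dk12 : κ ∣ k 1 2 := by
        refine ⟨h 2 0 * lam, ?_⟩
        have : ((k 1 2 : ℤ) : ℚ) = ((κ * (h 2 0 * lam) : ℤ) : ℚ) := by push_cast; linear_combination f02
        exact_mod_cast this
      have dk02 : κ ∣ k 0 2 := by
        refine ⟨h 2 1 * lam, ?_⟩
        have : ((k 0 2 : ℤ) : ℚ) = ((κ * (h 2 1 * lam) : ℤ) : ℚ) := by push_cast; linear_combination f12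
        exact_mod_cast this
      obtain ⟨p0, hp0⟩ := d02
      obtain ⟨p1, hp1⟩ := d12
      obtain ⟨q0, hq0⟩ := dk02
      obtain ⟨q1, hq1⟩ := dk12
      have gexpr : (!![1, 0, 0; 0, 1, 0; 0, 0, (κ:ℚ)] : Matrix (Fin 3) (Fin 3) ℚ) * (!![1, 0, 0; 0, 1, 0; 0, 0, ((κ:ℚ))⁻¹] * g * !![1, 0, 0; 0, 1, 0; 0, 0, (κ:ℚ)]) * !![1, 0, 0; 0, 1, 0; 0, 0, ((κ:ℚ))⁻¹] = g := by
        simp only [Matrix.mul_assoc]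
        rw [hPPi, Matrix.mul_one, ← Matrix.mul_assoc (!![1, 0, 0; 0, 1, 0; 0, 0, (κ:ℚ)] : Matrix (Fin 3) (Fin 3) ℚ) !![1, 0, 0; 0, 1, 0; 0, 0, ((κ:ℚ))⁻¹] g, hPPi, one_mul]
      have hconj : ((!![1, 0, 0; 0, 1, 0; 0, 0, (κ:ℚ)] : Matrix (Fin 3) (Fin 3) ℚ) * (!![1, 0, 0; 0, 1, 0; 0, 0, ((κ:ℚ))⁻¹] * g * !![1, 0, 0; 0, 1, 0; 0, 0, (κ:ℚ)]) * !![1, 0, 0; 0, 1, 0; 0, 0, ((κ:ℚ))⁻¹])⁻¹ = !![1, 0, 0; 0, 1, 0; 0, 0, (κ:ℚ)] * (!![1, 0, 0; 0, 1, 0; 0, 0, ((κ:ℚ))⁻¹] * g * !![1, 0, 0; 0, 1, 0; 0, 0, (κ:ℚ)])⁻¹ * !![1, 0, 0; 0, 1, 0; 0, 0, ((κ:ℚ))⁻¹] :=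
        matConjInv3 !![1, 0, 0; 0, 1, 0; 0, 0, ((κ:ℚ))⁻¹] !![1, 0, 0; 0, 1, 0; 0, 0, (κ:ℚ)] (!![1, 0, 0; 0, 1, 0; 0, 0, ((κ:ℚ))⁻¹] * g * !![1, 0, 0; 0, 1, 0; 0, 0, (κ:ℚ)]) hPiP hPPi hgu'
      have ginv : g⁻¹ = (!![1, 0, 0; 0, 1, 0; 0, 0, (κ:ℚ)] : Matrix (Fin 3) (Fin 3) ℚ) * (!![1, 0, 0; 0, 1, 0; 0, 0, ((κ:ℚ))⁻¹] * g * !![1, 0, 0; 0, 1, 0; 0, 0, (κ:ℚ)])⁻¹ * !![1, 0, 0; 0, 1, 0; 0, 0, ((κ:ℚ))⁻¹] := by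
        conv_lhs => rw [← gexpr]
        exact hconj
      refine ⟨⟨!![h 0 0, h 0 1, p0; h 1 0, h 1 1, p1; κ * h 2 0, κ * h 2 1, h 2 2], ?_⟩,
              ⟨!![k 0 0, k 0 1, q0; k 1 0, k 1 1, q1; κ * k 2 0, κ * k 2 1, k 2 2], ?_⟩, ?_⟩
      · rw [← gexpr, ← hh]
        ext i j
        fin_cases i <;> fin_cases j <;> simp [Matrix.mul_apply, Matrix.map_apply, Fin.sum_univ_three, Matrix.one_apply, Matrix.vecHead, Matrix.vecTail, Matrix.vecMul, Matrix.mulVec, dotProduct] <;>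
          push_cast [hp0, hp1] <;> first | rfl | ring1 | (field_simp; try ring1)
      · rw [ginv, ← hk]
        ext i j
        fin_cases i <;> fin_cases j <;> simp [Matrix.mul_apply, Matrix.map_apply, Fin.sum_univ_three, Matrix.one_apply, Matrix.vecHead, Matrix.vecTail, Matrix.vecMul, Matrix.mulVec, dotProduct] <;>
          push_cast [hq0, hq1] <;> first | rfl | ring1 | (field_simp; try ring1)
      · have hfin := matConjIsom3 !![0, 1, 0; 1, 0, 0; 0, 0, ((κ:ℚ) * (lam:ℚ))] !![0, (κ:ℚ), 0; (κ:ℚ), 0, 0; 0, 0, (lam:ℚ)] !![1, 0, 0; 0, 1, 0; 0, 0, ((κ:ℚ))⁻¹] !![1, 0, 0; 0, 1, 0; 0, 0, (κ:ℚ)] (κ:ℚ) hPiP hQ1eq (!![1, 0, 0; 0, 1, 0; 0, 0, ((κ:ℚ))⁻¹] * g * !![1, 0, 0; 0, 1, 0; 0, 0, (κ:ℚ)]) hQ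
        rw [gexpr] at hfin
        exact hfin
end

section
/- Let κ and λ be odd nonzero integers and L = U(κ) ⊕ ⟨λ⟩. Then L' := { v ∈ L | ⟨v,v⟩ ≡ 0 mod 2 } is a sublattice of index 2 in L, isometric to U(κ) ⊕ ⟨4λ⟩, and every isometry of L restricts to an isometry of L'; moreover every isometry of L' extends to an isometry of L, so O(L) ≅ O(L'). -/
/-!
Since `λ` is odd, `⟨v,v⟩ = 2κ v₀v₁ + λ v₂²` is even iff `v₂` is even, so `L'` has basis
`e₀, e₁, 2e₂`, whose Gram matrix is that of `U(κ) ⊕ ⟨4λ⟩`. With `B` this basis matrix, isometries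
`g` of `L` and `h` of `L'` correspond when `g B = B h`. An isometry of `L` preserves the parity of
norms, hence maps `e₀, e₁` into `L'`, which makes `B⁻¹ g B` integral. Conversely, as `κ` is odd,
the Gram matrix of `L'` reduces mod 2 to `U(1) ⊕ ⟨0⟩`, whose radical is spanned by `e₂`; an
invertible isometry preserves the radical, so the first two coordinates of `h e₂` are even, which
makes `B h B⁻¹` integral.
-/

open Matrix

section Congruence

variable {n R : Type*} [Fintype n] [CommRing R]

theorem Matrix.mul_left_cancel_of_det_ne_zero [DecidableEq n] [IsDomain R]
    {A M N : Matrix n n R} (hA : A.det ≠ 0) (h : A * M = A * N) : M = N :=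
  ext_iff_mulVec.2 fun v =>
    mulVec_injective_of_det_ne_zero hA (by rw [mulVec_mulVec, mulVec_mulVec, h])

theorem Matrix.mul_right_cancel_of_det_ne_zero [DecidableEq n] [IsDomain R]
    {A M N : Matrix n n R} (hA : A.det ≠ 0) (h : M * A = N * A) : M = N :=
  transpose_injective <| mul_left_cancel_of_det_ne_zero (A := Aᵀ) (by rwa [det_transpose])
    (by rw [← transpose_mul, ← transpose_mul, h])

theorem Matrix.det_eq_det_of_mul_eq_mul [DecidableEq n] [IsDomain R]
    {B g h : Matrix n n R} (hB : B.det ≠ 0) (hgh : g * B = B * h) : g.det = h.det := by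
  have := congrArg det hgh
  rw [det_mul, det_mul, mul_comm] at this
  exact mul_left_cancel₀ hB this

theorem Matrix.transpose_mul_mul_eq_of_mul_eq_mul {Q Q' B g h : Matrix n n R}
    (hB : Bᵀ * Q * B = Q') (hgh : g * B = B * h) (hg : gᵀ * Q * g = Q) :
    hᵀ * Q' * h = Q' := by
  calc hᵀ * Q' * h = (B * h)ᵀ * Q * (B * h) := by
        simp only [← hB, transpose_mul, Matrix.mul_assoc]
    _ = Bᵀ * (gᵀ * Q * g) * B := by
        simp only [← hgh, transpose_mul, Matrix.mul_assoc]
    _ = Q' := by rw [hg, hB]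

theorem Matrix.transpose_mul_mul_eq_of_mul_eq_mul_of_det_ne_zero [DecidableEq n] [IsDomain R]
    {Q Q' B g h : Matrix n n R} (hdet : B.det ≠ 0)
    (hB : Bᵀ * Q * B = Q') (hgh : g * B = B * h) (hh : hᵀ * Q' * h = Q') :
    gᵀ * Q * g = Q := by
  have hconj : Bᵀ * (gᵀ * Q * g * B) = Bᵀ * (Q * B) := by
    calc Bᵀ * (gᵀ * Q * g * B) = (B * h)ᵀ * Q * (B * h) := by
          simp only [← hgh, transpose_mul, Matrix.mul_assoc]
      _ = hᵀ * Q' * h := by simp only [← hB, transpose_mul, Matrix.mul_assoc]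
      _ = Bᵀ * (Q * B) := by rw [hh, ← hB, Matrix.mul_assoc]
  exact mul_right_cancel_of_det_ne_zero hdet
    (mul_left_cancel_of_det_ne_zero (by rwa [det_transpose]) hconj)

theorem Matrix.dotProduct_mulVec_mulVec (Q g : Matrix n n R) (v : n → R) :
    g *ᵥ v ⬝ᵥ Q *ᵥ (g *ᵥ v) = v ⬝ᵥ (gᵀ * Q * g) *ᵥ v := by
  rw [← mulVec_mulVec, ← mulVec_mulVec, mulVec_transpose, dotProduct_comm v, ← dotProduct_mulVec,
    dotProduct_comm]

theorem Matrix.mulVec_mulVec_eq_zero_of_isometry [DecidableEq n] {Q H : Matrix n n R}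
    (hH : Hᵀ * Q * H = Q) (hdet : IsUnit H.det) {v : n → R} (hv : Q *ᵥ v = 0) :
    Q *ᵥ (H *ᵥ v) = 0 := by
  refine eq_zero_of_det_mem_nonZeroDivisors_of_mulVec_eq_zero (M := Hᵀ) ?_ ?_
  · rw [det_transpose]; exact hdet.mem_nonZeroDivisors
  · rw [mulVec_mulVec, mulVec_mulVec, hH, hv]

end Congruence

def uSumGram {R : Type*} [Zero R] (κ lam : R) : Matrix (Fin 3) (Fin 3) R :=
  !![0, κ, 0; κ, 0, 0; 0, 0, lam]

def evenBasis : Matrix (Fin 3) (Fin 3) ℤ :=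
  !![1, 0, 0; 0, 1, 0; 0, 0, 2]

theorem uSumGram_map {R S : Type*} [Zero R] [Zero S] (f : R → S) (hf : f 0 = 0) (κ lam : R) :
    (uSumGram κ lam).map f = uSumGram (f κ) (f lam) := by
  ext i j; fin_cases i <;> fin_cases j <;> simp [uSumGram, hf]

theorem uSumGram_mulVec {R : Type*} [NonUnitalNonAssocSemiring R] (κ lam : R) (v : Fin 3 → R) :
    uSumGram κ lam *ᵥ v = ![κ * v 1, κ * v 0, lam * v 2] := by
  ext i; fin_cases i <;> simp [uSumGram, mulVec, dotProduct, Fin.sum_univ_three]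

theorem dotProduct_uSumGram_mulVec {R : Type*} [CommSemiring R] (κ lam : R) (v : Fin 3 → R) :
    v ⬝ᵥ uSumGram κ lam *ᵥ v = 2 * κ * v 0 * v 1 + lam * v 2 ^ 2 := by
  simp [uSumGram_mulVec, dotProduct, Fin.sum_univ_three]
  ring

theorem two_dvd_dotProduct_uSumGram_mulVec_iff {κ lam : ℤ} (hlam : Odd lam) (v : Fin 3 → ℤ) :
    2 ∣ v ⬝ᵥ uSumGram κ lam *ᵥ v ↔ 2 ∣ v 2 := by
  rw [dotProduct_uSumGram_mulVec, ← even_iff_two_dvd, ← even_iff_two_dvd]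
  simp [Int.even_add, Int.even_mul, parity_simps, Int.not_even_iff_odd.mpr hlam]

theorem evenBasis_mulVec (c : Fin 3 → ℤ) : evenBasis *ᵥ c = ![c 0, c 1, 2 * c 2] := by
  ext i; fin_cases i <;> simp [evenBasis, mulVec, dotProduct, Fin.sum_univ_three]

theorem two_dvd_iff_exists_eq_evenBasis_mulVec (v : Fin 3 → ℤ) :
    2 ∣ v 2 ↔ ∃ c, v = evenBasis *ᵥ c := by
  simp only [evenBasis_mulVec]
  constructor
  · rintro ⟨k, hk⟩
    exact ⟨![v 0, v 1, k], by ext i; fin_cases i <;> simp [hk]⟩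
  · rintro ⟨c, rfl⟩
    exact ⟨c 2, rfl⟩

theorem det_evenBasis : evenBasis.det = 2 := by
  simp [evenBasis, det_fin_three]

theorem evenBasis_transpose_mul_uSumGram_mul (κ lam : ℤ) :
    evenBasisᵀ * uSumGram κ lam * evenBasis = uSumGram κ (4 * lam) := by
  ext i j
  fin_cases i <;> fin_cases j <;> simp [evenBasis, uSumGram, mul_apply, Fin.sum_univ_three]
  ring

theorem exists_mul_evenBasis_eq_evenBasis_mul {g : Matrix (Fin 3) (Fin 3) ℤ}
    (h0 : 2 ∣ g 2 0) (h1 : 2 ∣ g 2 1) : ∃ h, g * evenBasis = evenBasis * h := by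
  obtain ⟨p, hp⟩ := h0
  obtain ⟨q, hq⟩ := h1
  refine ⟨!![g 0 0, g 0 1, 2 * g 0 2; g 1 0, g 1 1, 2 * g 1 2; p, q, g 2 2], ?_⟩
  ext i j; fin_cases i <;> fin_cases j <;>
    simp [evenBasis, mul_apply, Fin.sum_univ_three, hp, hq] <;> ring

theorem exists_evenBasis_mul_eq_mul_evenBasis {h : Matrix (Fin 3) (Fin 3) ℤ}
    (h0 : 2 ∣ h 0 2) (h1 : 2 ∣ h 1 2) : ∃ g, g * evenBasis = evenBasis * h := by
  obtain ⟨c, hc⟩ := h0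
  obtain ⟨f, hf⟩ := h1
  refine ⟨!![h 0 0, h 0 1, c; h 1 0, h 1 1, f; 2 * h 2 0, 2 * h 2 1, h 2 2], ?_⟩
  ext i j; fin_cases i <;> fin_cases j <;>
    simp [evenBasis, mul_apply, Fin.sum_univ_three, hc, hf] <;> ring

theorem two_dvd_apply_two_of_isometry {κ lam : ℤ} (hlam : Odd lam) {g : Matrix (Fin 3) (Fin 3) ℤ}
    (hg : gᵀ * uSumGram κ lam * g = uSumGram κ lam) {j : Fin 3} (hj : j ≠ 2) : 2 ∣ g 2 j := by
  have h := two_dvd_dotProduct_uSumGram_mulVec_iff (κ := κ) hlam (g *ᵥ Pi.single j 1)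
  rw [dotProduct_mulVec_mulVec, hg, two_dvd_dotProduct_uSumGram_mulVec_iff hlam,
    mulVec_single_one] at h
  simpa [hj.symm] using h

theorem two_dvd_apply_of_isometry_uSumGram_four {κ lam : ℤ} (hκ : Odd κ) {h : Matrix (Fin 3) (Fin 3) ℤ}
    (hdet : IsUnit h.det) (hh : hᵀ * uSumGram κ (4 * lam) * h = uSumGram κ (4 * lam)) :
    2 ∣ h 0 2 ∧ 2 ∣ h 1 2 := by
  set f := Int.castRingHom (ZMod 2)
  have hQ : (uSumGram κ (4 * lam)).map f = uSumGram 1 0 := by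
    rw [uSumGram_map _ (map_zero f)]
    congr 1
    · exact ZMod.intCast_eq_one_iff_odd.mpr hκ
    · simp [f, show (4 : ZMod 2) = 0 from rfl]
  have hH : (h.map f)ᵀ * uSumGram 1 0 * h.map f = uSumGram 1 0 := by
    rw [← hQ, ← transpose_map, ← Matrix.map_mul, ← Matrix.map_mul, hh]
  have hdetH : IsUnit (h.map f).det := by
    rw [← RingHom.mapMatrix_apply, ← RingHom.map_det]; exact hdet.map f
  have hrad := mulVec_mulVec_eq_zero_of_isometry hH hdetH (v := Pi.single 2 1)
    (by ext i; fin_cases i <;> rfl)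
  rw [uSumGram_mulVec, mulVec_single_one] at hrad
  have h0 := congrFun hrad 1
  have h1 := congrFun hrad 0
  simp [f] at h0 h1
  exact ⟨(ZMod.intCast_zmod_eq_zero_iff_dvd _ 2).mp h0, (ZMod.intCast_zmod_eq_zero_iff_dvd _ 2).mp h1⟩

theorem stmt_5_general (κ lam : ℤ)
    (hκodd : Odd κ) (hlamodd : Odd lam) :
    ∃ B : Matrix (Fin 3) (Fin 3) ℤ,
      (∀ v : Fin 3 → ℤ,
        (2 ∣ v ⬝ᵥ ((!![0, κ, 0; κ, 0, 0; 0, 0, lam]).mulVec v)) ↔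
        ∃ c : Fin 3 → ℤ, v = B.mulVec c) ∧
      (B.det = 2 ∨ B.det = -2) ∧
      Bᵀ * !![0, κ, 0; κ, 0, 0; 0, 0, lam] * B = !![0, κ, 0; κ, 0, 0; 0, 0, 4 * lam] ∧
      (∀ g : Matrix (Fin 3) (Fin 3) ℤ, IsUnit g.det →
        gᵀ * !![0, κ, 0; κ, 0, 0; 0, 0, lam] * g = !![0, κ, 0; κ, 0, 0; 0, 0, lam] →
        ∃ h : Matrix (Fin 3) (Fin 3) ℤ, IsUnit h.det ∧
          hᵀ * !![0, κ, 0; κ, 0, 0; 0, 0, 4 * lam] * h =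
            !![0, κ, 0; κ, 0, 0; 0, 0, 4 * lam] ∧
          g * B = B * h) ∧
      (∀ h : Matrix (Fin 3) (Fin 3) ℤ, IsUnit h.det →
        hᵀ * !![0, κ, 0; κ, 0, 0; 0, 0, 4 * lam] * h =
          !![0, κ, 0; κ, 0, 0; 0, 0, 4 * lam] →
        ∃ g : Matrix (Fin 3) (Fin 3) ℤ, IsUnit g.det ∧
          gᵀ * !![0, κ, 0; κ, 0, 0; 0, 0, lam] * g = !![0, κ, 0; κ, 0, 0; 0, 0, lam] ∧
          g * B = B * h) := by
  have hB : evenBasis.det ≠ 0 := by rw [det_evenBasis]; norm_num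
  have hgram := evenBasis_transpose_mul_uSumGram_mul κ lam
  refine ⟨evenBasis, fun v => (two_dvd_dotProduct_uSumGram_mulVec_iff hlamodd v).trans
    (two_dvd_iff_exists_eq_evenBasis_mulVec v), .inl det_evenBasis, hgram, ?_, ?_⟩
  · intro g hg hgQ
    obtain ⟨h, hgh⟩ := exists_mul_evenBasis_eq_evenBasis_mul
      (two_dvd_apply_two_of_isometry hlamodd hgQ (by decide))
      (two_dvd_apply_two_of_isometry hlamodd hgQ (by decide))
    exact ⟨h, det_eq_det_of_mul_eq_mul hB hgh ▸ hg,
      transpose_mul_mul_eq_of_mul_eq_mul hgram hgh hgQ, hgh⟩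
  · intro h hh hhQ
    obtain ⟨h02, h12⟩ := two_dvd_apply_of_isometry_uSumGram_four hκodd hh hhQ
    obtain ⟨g, hgh⟩ := exists_evenBasis_mul_eq_mul_evenBasis h02 h12
    exact ⟨g, (det_eq_det_of_mul_eq_mul hB hgh).symm ▸ hh,
      transpose_mul_mul_eq_of_mul_eq_mul_of_det_ne_zero hB hgram hgh hhQ, hgh⟩

/-- Let `κ, λ` be odd nonzero integers and `L = U(κ) ⊕ ⟨λ⟩` (Gram matrix `Q`).
Then `L' = { v ∈ L | ⟨v,v⟩ even }` is a sublattice of index 2 (basis matrix `B`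
with `det B = ±2`), isometric to `U(κ) ⊕ ⟨4λ⟩`; every isometry of `L` restricts to
one of `L'`, and every isometry of `L'` extends to one of `L`, so `O(L) ≅ O(L')`. -/
theorem stmt_5 (κ lam : ℤ) (hκ : κ ≠ 0) (hlam : lam ≠ 0)
    (hκodd : Odd κ) (hlamodd : Odd lam) :
    ∃ B : Matrix (Fin 3) (Fin 3) ℤ,
      (∀ v : Fin 3 → ℤ,
        (2 ∣ v ⬝ᵥ ((!![0, κ, 0; κ, 0, 0; 0, 0, lam]).mulVec v)) ↔
        ∃ c : Fin 3 → ℤ, v = B.mulVec c) ∧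
      (B.det = 2 ∨ B.det = -2) ∧
      Bᵀ * !![0, κ, 0; κ, 0, 0; 0, 0, lam] * B = !![0, κ, 0; κ, 0, 0; 0, 0, 4 * lam] ∧
      (∀ g : Matrix (Fin 3) (Fin 3) ℤ, IsUnit g.det →
        gᵀ * !![0, κ, 0; κ, 0, 0; 0, 0, lam] * g = !![0, κ, 0; κ, 0, 0; 0, 0, lam] →
        ∃ h : Matrix (Fin 3) (Fin 3) ℤ, IsUnit h.det ∧
          hᵀ * !![0, κ, 0; κ, 0, 0; 0, 0, 4 * lam] * h =
            !![0, κ, 0; κ, 0, 0; 0, 0, 4 * lam] ∧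
          g * B = B * h) ∧
      (∀ h : Matrix (Fin 3) (Fin 3) ℤ, IsUnit h.det →
        hᵀ * !![0, κ, 0; κ, 0, 0; 0, 0, 4 * lam] * h =
          !![0, κ, 0; κ, 0, 0; 0, 0, 4 * lam] →
        ∃ g : Matrix (Fin 3) (Fin 3) ℤ, IsUnit g.det ∧
          gᵀ * !![0, κ, 0; κ, 0, 0; 0, 0, lam] * g = !![0, κ, 0; κ, 0, 0; 0, 0, lam] ∧
          g * B = B * h) :=
  stmt_5_general κ lam hκodd hlamodd
end

section
/- Let L be a nondegenerate even lattice of rank n with Gram matrix Q, let s be a nonzero integer such that (1/s)Q is an integer matrix, and let g ∈ O(L) lie in the discriminant kernel (i.e., (g - I)Q^{-1} is integral). Then g^s lies in the discriminant kernel of L(s), i.e., (g^s - I)(sQ)^{-1} is an integer matrix. -/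
open Matrix

/-!
Over `ℚ`, "`(g - 1) Q⁻¹` is integral" just says `g - 1 = A Q` with `A` integral. Write
`Q = s Q₀`. In any ring, a product `(1 + x Q)(1 + y Q) = 1 + (x + y + s x Q₀ y) Q` adds the
coefficients modulo `s`, so `g ^ m = 1 + (m A + s C) Q` for every `m ∈ ℤ`; at `m = s` this gives
`g ^ s - 1 = (A + C)(s Q)`.
-/

section UnitsOfFormOneAddMul

variable {R : Type*} [Ring R] (s : ℤ) (q₀ : R)

lemma one_add_mul_smul_mul_one_add_mul_smul (x y : R) :
    (1 + x * (s • q₀)) * (1 + y * (s • q₀)) =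
      1 + (x + y + s • (x * q₀ * y)) * (s • q₀) := by
  simp only [mul_add, add_mul, mul_one, one_mul, smul_mul_assoc, mul_smul_comm, smul_add,
    smul_smul, mul_assoc]
  abel

variable {s q₀} {a : R} {u : Rˣ}

lemma val_inv_eq_one_add_mul_smul (hu : (u : R) = 1 + a * (s • q₀)) :
    ((u⁻¹ : Rˣ) : R) = 1 + (-a + s • ((u⁻¹ : Rˣ) * a * q₀ * a)) * (s • q₀) := by
  have h : ((u⁻¹ : Rˣ) : R) * a * (s • q₀) = 1 - (u⁻¹ : Rˣ) := by
    rw [mul_assoc, ← sub_eq_iff_eq_add'.mpr hu, mul_sub, Units.inv_mul, mul_one]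
  calc ((u⁻¹ : Rˣ) : R)
      = 1 + (-a) * (s • q₀) + ((u⁻¹ : Rˣ) * a * (s • q₀)) * a * (s • q₀) := by
        simp only [h, sub_mul, one_mul, neg_mul]; abel
    _ = _ := by
        simp only [add_mul, smul_mul_assoc, mul_smul_comm, mul_assoc]
        module

lemma exists_val_zpow_eq_one_add_mul_smul (hu : (u : R) = 1 + a * (s • q₀)) (m : ℤ) :
    ∃ c : R, ((u ^ m : Rˣ) : R) = 1 + (m • a + s • c) * (s • q₀) := by
  induction m using Int.induction_on with
  | zero => exact ⟨0, by simp⟩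
  | succ i ih =>
    obtain ⟨c, hc⟩ := ih
    refine ⟨c + ((i : ℤ) • a + s • c) * q₀ * a, ?_⟩
    rw [_root_.zpow_add_one, Units.val_mul, hc, hu, one_add_mul_smul_mul_one_add_mul_smul]
    refine congrArg (fun x : R => 1 + x * (s • q₀)) ?_
    module
  | pred i ih =>
    obtain ⟨c, hc⟩ := ih
    set d : R := (u⁻¹ : Rˣ) * a * q₀ * a
    refine ⟨c + d + (-(i : ℤ) • a + s • c) * q₀ * (-a + s • d), ?_⟩
    rw [_root_.zpow_sub_one, Units.val_mul, hc, val_inv_eq_one_add_mul_smul hu,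
      one_add_mul_smul_mul_one_add_mul_smul]
    refine congrArg (fun x : R => 1 + x * (s • q₀)) ?_
    module

lemma exists_val_zpow_self_sub_one_eq_mul_smul {q : R} (hq : q = s • q₀)
    (hu : (u : R) - 1 = a * q) : ∃ b : R, ((u ^ s : Rˣ) : R) - 1 = b * (s • q) := by
  subst hq
  obtain ⟨c, hc⟩ := exists_val_zpow_eq_one_add_mul_smul (sub_eq_iff_eq_add'.mp hu) s
  refine ⟨a + c, ?_⟩
  rw [hc, add_sub_cancel_left, ← smul_add]
  simp only [smul_mul_assoc, mul_smul_comm]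

end UnitsOfFormOneAddMul

section IntegralMatrices

variable {n : Type*} [DecidableEq n]

lemma Matrix.map_intCast_sub_one (X : Matrix n n ℤ) :
    (X - 1).map (Int.cast : ℤ → ℚ) = X.map Int.cast - 1 := by
  rw [Matrix.map_sub _ Int.cast_sub, Matrix.map_one _ Int.cast_zero Int.cast_one]

lemma Matrix.map_intCast_mul_inv_eq_map_intCast_iff [Fintype n] {Q : Matrix n n ℤ}
    (hQ : Q.det ≠ 0) (X A : Matrix n n ℤ) :
    X.map (Int.cast : ℤ → ℚ) * (Q.map Int.cast)⁻¹ = A.map Int.cast ↔ X = A * Q := by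
  have : Invertible (Q.map (Int.cast : ℤ → ℚ)) :=
    invertibleOfIsUnitDet _ (by rw [← Int.cast_det]; exact isUnit_iff_ne_zero.mpr (mod_cast hQ))
  have hmul : A.map (Int.cast : ℤ → ℚ) * Q.map Int.cast = (A * Q).map Int.cast :=
    (Matrix.map_mul (f := Int.castRingHom ℚ)).symm
  rw [mul_inv_eq_iff_eq_mul_of_invertible, hmul]
  exact (Matrix.map_injective Int.cast_injective).eq_iff

end IntegralMatrices

theorem stmt_7_general (n : ℕ) (Q : Matrix (Fin n) (Fin n) ℤ) (hQ : Q.det ≠ 0)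
    (s : ℤ) (hs : s ≠ 0)
    (hdiv : ∃ Q₀ : Matrix (Fin n) (Fin n) ℤ, Q = s • Q₀)
    (g : GL (Fin n) ℤ)
    (hker : ∃ A : Matrix (Fin n) (Fin n) ℤ,
      ((g : Matrix (Fin n) (Fin n) ℤ).map (Int.cast : ℤ → ℚ) - 1) *
        (Q.map (Int.cast : ℤ → ℚ))⁻¹ = A.map (Int.cast : ℤ → ℚ)) :
    ∃ B : Matrix (Fin n) (Fin n) ℤ,
      (((g ^ s : GL (Fin n) ℤ) : Matrix (Fin n) (Fin n) ℤ).map (Int.cast : ℤ → ℚ) - 1) *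
        ((s : ℚ) • Q.map (Int.cast : ℤ → ℚ))⁻¹ = B.map (Int.cast : ℤ → ℚ) := by
  obtain ⟨Q₀, hQ₀⟩ := hdiv
  obtain ⟨A, hA⟩ := hker
  rw [← Matrix.map_intCast_sub_one, Matrix.map_intCast_mul_inv_eq_map_intCast_iff hQ] at hA
  obtain ⟨B, hB⟩ := exists_val_zpow_self_sub_one_eq_mul_smul hQ₀ hA
  have hsQ : (s • Q).det ≠ 0 := by
    rw [det_smul]
    exact mul_ne_zero (pow_ne_zero _ hs) hQ
  refine ⟨B, ?_⟩
  rw [← Matrix.map_intCast_sub_one, ← Matrix.map_smul' _ _ _ (fun _ _ => Int.cast_mul _ _),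
    Matrix.map_intCast_mul_inv_eq_map_intCast_iff hsQ]
  exact hB

/-- Let `L` be a nondegenerate even lattice with symmetric Gram matrix `Q`, `s` a
nonzero integer with `(1/s)Q` integral, and `g ∈ O(L)` in the discriminant kernel
(i.e. `(g-I)Q⁻¹` integral). Then `g^s` is in the discriminant kernel of `L(s)`:
`(g^s - I)(sQ)⁻¹` is integral. -/
theorem stmt_7 (n : ℕ) (Q : Matrix (Fin n) (Fin n) ℤ) (hQ : Q.det ≠ 0)
    (hsymm : Qᵀ = Q) (heven : ∀ i, 2 ∣ Q i i) (s : ℤ) (hs : s ≠ 0)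
    (hdiv : ∃ Q₀ : Matrix (Fin n) (Fin n) ℤ, Q = s • Q₀)
    (g : GL (Fin n) ℤ)
    (horth : (g : Matrix (Fin n) (Fin n) ℤ)ᵀ * Q * (g : Matrix (Fin n) (Fin n) ℤ) = Q)
    (hker : ∃ A : Matrix (Fin n) (Fin n) ℤ,
      ((g : Matrix (Fin n) (Fin n) ℤ).map (Int.cast : ℤ → ℚ) - 1) *
        (Q.map (Int.cast : ℤ → ℚ))⁻¹ = A.map (Int.cast : ℤ → ℚ)) :
    ∃ B : Matrix (Fin n) (Fin n) ℤ,
      (((g ^ s : GL (Fin n) ℤ) : Matrix (Fin n) (Fin n) ℤ).map (Int.cast : ℤ → ℚ) - 1) *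
        ((s : ℚ) • Q.map (Int.cast : ℤ → ℚ))⁻¹ = B.map (Int.cast : ℤ → ℚ) :=
  stmt_7_general n Q hQ s hs hdiv g hker
end

section
/- Let n ≥ 2 and let G_n be the subgroup of PGL_2(ℤ) of classes of matrices α with det α = ±1 and α ≡ λI mod n for some integer λ. Then G_n contains Γ(n) as a normal subgroup, and the quotient G_n/Γ(n) is isomorphic to { λ ∈ (ℤ/nℤ)^× | λ² ≡ ±1 mod n } / {±1 mod n}. -/
/-!
Reducing `α ∈ G_n` mod `n` gives a scalar matrix `λI`, and `α ↦ λ` is a homomorphism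
`G_n → (ℤ/nℤ)^×` whose preimage of `{±1}` is `Γ(n)`. Taking determinants, `λ² ≡ det α = ±1`.
Conversely every `λ` with `λ² ≡ ε = ±1` occurs: an integer lift `a` of `λ` is prime to `n²`, so
`a x + n² y = 1` for some `x, y`, and `!![a, -ε y n; n, ε x]` has determinant `ε` and is `≡ λI`.
-/

open Matrix

/-- Reduction mod `n` on `GL_2`. -/
def redMap (n : ℕ) : GL (Fin 2) ℤ →* GL (Fin 2) (ZMod n) :=
  Units.map ((Int.castRingHom (ZMod n)).mapMatrix.toMonoidHom)

/-- The subgroup of scalar matrices in `GL_2(ℤ/nℤ)`. -/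
def scalarUnits (n : ℕ) : Subgroup (GL (Fin 2) (ZMod n)) :=
  (Units.map (Matrix.scalar (Fin 2) : ZMod n →+* Matrix (Fin 2) (Fin 2) (ZMod n)).toMonoidHom).range

/-- `G_n`: matrices in `GL_2(ℤ)` congruent to a scalar matrix `λI` mod `n`. -/
def Ghat (n : ℕ) : Subgroup (GL (Fin 2) ℤ) :=
  Subgroup.comap (redMap n) (scalarUnits n)

/-- The subgroup `{±1}` of `(ℤ/nℤ)^×`. -/
def pmOne (n : ℕ) : Subgroup (ZMod n)ˣ :=
  Subgroup.closure {(-1 : (ZMod n)ˣ)}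

/-- `Γ(n)`: matrices in `GL_2(ℤ)` congruent to `±I` mod `n`. -/
def Gammahat (n : ℕ) : Subgroup (GL (Fin 2) ℤ) :=
  Subgroup.comap (redMap n)
    (Subgroup.map
      (Units.map (Matrix.scalar (Fin 2) : ZMod n →+* Matrix (Fin 2) (Fin 2) (ZMod n)).toMonoidHom)
      (pmOne n))

/-- `{ λ ∈ (ℤ/nℤ)^× | λ² ≡ ±1 mod n }`. -/
def Ktarget (n : ℕ) : Subgroup (ZMod n)ˣ :=
  Subgroup.comap (powMonoidHom 2 : (ZMod n)ˣ →* (ZMod n)ˣ) (pmOne n)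

open Matrix.GeneralLinearGroup

theorem Matrix.GeneralLinearGroup.scalar_injective {ι R : Type*} [Fintype ι] [DecidableEq ι]
    [Nonempty ι] [CommRing R] : Function.Injective (scalar ι : Rˣ →* GL ι R) :=
  fun _ _ h => Units.ext (Matrix.scalar_inj.mp (congrArg Units.val h))

theorem Units.closure_neg_one_eq_range_intCast (R : Type*) [Ring R] :
    Subgroup.closure {(-1 : Rˣ)} = (Units.map (Int.castRingHom R).toMonoidHom).range := by
  refine le_antisymm (Subgroup.closure_le _ |>.mpr ?_) ?_
  · rintro _ rfl
    exact ⟨-1, by ext; simp⟩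
  · rintro _ ⟨ε, rfl⟩
    rcases Int.units_eq_one_or ε with rfl | rfl
    · simp
    · exact Subgroup.subset_closure (by ext; simp)

theorem Matrix.exists_det_eq_map_eq_scalar {n : ℕ} {a e : ℤ} (he : IsUnit e)
    (h : ((a ^ 2 : ℤ) : ZMod n) = e) :
    ∃ M : Matrix (Fin 2) (Fin 2) ℤ, M.det = e ∧
      M.map (Int.cast : ℤ → ZMod n) = Matrix.scalar (Fin 2) (a : ZMod n) := by
  obtain ⟨k, hk⟩ := (ZMod.intCast_eq_intCast_iff_dvd_sub _ _ _).mp h.symm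
  have hcop : IsCoprime a ((n : ℤ) ^ 2) :=
    IsCoprime.pow_right ⟨a * e, -k * e, by linear_combination e * hk + Int.isUnit_mul_self he⟩
  obtain ⟨x, y, hxy⟩ := hcop
  refine ⟨!![a, -e * y * n; (n : ℤ), e * x], ?_, ?_⟩
  · rw [Matrix.det_fin_two_of]
    linear_combination e * hxy
  · have hx : (a : ZMod n) * x = 1 := by
      simpa [mul_comm] using congrArg (Int.cast : ℤ → ZMod n) hxy
    have hdiag : (e : ZMod n) * x = a := by
      push_cast at h
      linear_combination (x : ZMod n) * h.symm + (a : ZMod n) * hx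
    ext i j
    fin_cases i <;> fin_cases j <;> simp [hdiag, -map_intCast]

namespace Ghat

variable {n : ℕ}

noncomputable def scalarHom (n : ℕ) : Ghat n →* (ZMod n)ˣ :=
  (MonoidHom.ofInjective (scalar_injective (ι := Fin 2))).symm.toMonoidHom.comp
    ((redMap n).subgroupComap (scalarUnits n))

theorem scalar_scalarHom (A : Ghat n) : scalar (Fin 2) (scalarHom n A) = redMap n A :=
  MonoidHom.apply_ofInjective_symm scalar_injective _

theorem scalarHom_sq (A : Ghat n) :
    scalarHom n A ^ 2 = Units.map (Int.castRingHom (ZMod n)).toMonoidHom (det (A : GL (Fin 2) ℤ)) :=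
  calc scalarHom n A ^ 2 = det (scalar (Fin 2) (scalarHom n A)) := by simp
    _ = det (redMap n A) := by rw [scalar_scalarHom]
    _ = _ := Matrix.GeneralLinearGroup.map_det _ _

theorem exists_redMap_eq_scalar {u : (ZMod n)ˣ} (hu : u ^ 2 ∈ pmOne n) :
    ∃ A : GL (Fin 2) ℤ, redMap n A = scalar (Fin 2) u := by
  rw [pmOne, Units.closure_neg_one_eq_range_intCast] at hu
  obtain ⟨ε, hε⟩ := hu
  obtain ⟨a, ha⟩ : ∃ a : ℤ, (a : ZMod n) = u := ZMod.intCast_surjective _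
  obtain ⟨M, hdet, hM⟩ := Matrix.exists_det_eq_map_eq_scalar (n := n) (a := a) ε.isUnit
    (by simpa [ha] using (congrArg Units.val hε).symm)
  have hM_unit : IsUnit M := (Matrix.isUnit_iff_isUnit_det M).mpr (hdet ▸ ε.isUnit)
  exact ⟨hM_unit.unit, Units.ext (by simpa [redMap, ha] using hM)⟩

theorem range_scalarHom : (scalarHom n).range = Ktarget n := by
  ext u
  refine ⟨?_, fun hu => ?_⟩
  · rintro ⟨A, rfl⟩
    change scalarHom n A ^ 2 ∈ pmOne n
    rw [scalarHom_sq, pmOne, Units.closure_neg_one_eq_range_intCast]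
    exact ⟨_, rfl⟩
  · obtain ⟨A, hA⟩ := exists_redMap_eq_scalar hu
    exact ⟨⟨A, u, hA.symm⟩, scalar_injective (by rw [scalar_scalarHom, hA])⟩

theorem mem_Gammahat_iff (A : Ghat n) :
    (A : GL (Fin 2) ℤ) ∈ Gammahat n ↔ scalarHom n A ∈ pmOne n := by
  rw [Gammahat, Subgroup.mem_comap, ← scalar_scalarHom]
  exact Subgroup.mem_map_iff_mem scalar_injective

end Ghat

theorem Gammahat_le_Ghat (n : ℕ) : Gammahat n ≤ Ghat n :=
  Subgroup.comap_mono (Subgroup.map_le_range _ _)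

/-- Working in `GL_2(ℤ)` rather than `PGL_2(ℤ)` changes neither quotient, since `±I ∈ Γ(n)`. -/
theorem stmt_10_general (n : ℕ) :
    Gammahat n ≤ Ghat n ∧
    ∃ φ : Ghat n →* (Ktarget n ⧸ (pmOne n).subgroupOf (Ktarget n)),
      Function.Surjective φ ∧ φ.ker = (Gammahat n).subgroupOf (Ghat n) := by
  refine ⟨Gammahat_le_Ghat n, ?_⟩
  let ψ : Ghat n →* Ktarget n :=
    (MulEquiv.subgroupCongr Ghat.range_scalarHom).toMonoidHom.comp (Ghat.scalarHom n).rangeRestrict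
  have hψ : Function.Surjective ψ := by
    simpa only [ψ, MonoidHom.coe_comp, MulEquiv.coe_toMonoidHom] using
      (MulEquiv.surjective _).comp (Ghat.scalarHom n).rangeRestrict_surjective
  refine ⟨(QuotientGroup.mk' _).comp ψ, (QuotientGroup.mk'_surjective _).comp hψ, ?_⟩
  ext A
  simp [ψ, QuotientGroup.eq_one_iff, Subgroup.mem_subgroupOf, Ghat.mem_Gammahat_iff]

/-- For `n ≥ 2`, `Γ(n)` is a normal subgroup of `G_n` and
`G_n/Γ(n) ≅ { λ ∈ (ℤ/nℤ)^× | λ² ≡ ±1 mod n } / {±1 mod n}`: there is a surjective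
homomorphism from `G_n` onto the latter quotient with kernel exactly `Γ(n)`.
(Working in `GL_2(ℤ)` rather than `PGL_2(ℤ)`: both quotients are unchanged since
`±I` lies in `Γ(n)`.) -/
theorem stmt_10 (n : ℕ) (hn : 2 ≤ n) :
    Gammahat n ≤ Ghat n ∧
    ∃ φ : Ghat n →* (Ktarget n ⧸ (pmOne n).subgroupOf (Ktarget n)),
      Function.Surjective φ ∧ φ.ker = (Gammahat n).subgroupOf (Ghat n) :=
  stmt_10_general n
end

section
/- Let n ≥ 2. The group G_n := { α ∈ PGL_2(ℤ) | α ≡ λI mod n for some λ ∈ ℤ } is contained in PSL_2(ℤ) if and only if -1 is not a quadratic residue modulo n. -/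
open Matrix

/-- For `n ≥ 2`, the group `G_n = { α ∈ PGL_2(ℤ) | α ≡ λI mod n }` is contained in
`PSL_2(ℤ)` if and only if `-1` is not a quadratic residue modulo `n`.  (A class in
`PGL_2(ℤ)` lies in `PSL_2(ℤ)` precisely when a representative has determinant `1`,
and `det(-A) = det A` for 2×2 matrices.) -/
theorem stmt_11 (n : ℕ) (hn : 2 ≤ n) :
    (∀ A : GL (Fin 2) ℤ,
      (∃ lam : ZMod n,
        (A : Matrix (Fin 2) (Fin 2) ℤ).map (Int.cast : ℤ → ZMod n) =
          lam • (1 : Matrix (Fin 2) (Fin 2) (ZMod n))) →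
      (A : Matrix (Fin 2) (Fin 2) ℤ).det = 1) ↔
    ¬ ∃ a : ℤ, (n : ℤ) ∣ (a ^ 2 + 1) := by
  haveI : NeZero n := ⟨by omega⟩
  constructor
  · rintro h ⟨a, m, hm⟩
    -- explicit matrix of determinant -1 congruent to a•I mod n
    set M : Matrix (Fin 2) (Fin 2) ℤ := !![a, n * m ^ 2; n, a + n * a * m] with hM
    have hdet : M.det = -1 := by
      simp only [hM, Matrix.det_fin_two_of]
      nlinarith [hm]
    have hU : IsUnit M := (Matrix.isUnit_iff_isUnit_det M).mpr (by
      rw [hdet]; exact isUnit_one.neg)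
    have hcongr : M.map (Int.cast : ℤ → ZMod n) =
        ((a : ZMod n)) • (1 : Matrix (Fin 2) (Fin 2) (ZMod n)) := by
      ext i j
      fin_cases i <;> fin_cases j <;>
        simp [hM, Matrix.one_apply, ZMod.natCast_self] <;> push_cast <;>
        simp [ZMod.natCast_self]
    have := h hU.unit ⟨(a : ZMod n), by rw [hU.unit_spec]; exact hcongr⟩
    rw [hU.unit_spec] at this
    rw [hdet] at this
    omega
  · intro h A ⟨lam, hlam⟩
    have hunit : IsUnit ((A : Matrix (Fin 2) (Fin 2) ℤ).det) := by
      refine IsUnit.of_mul_eq_one (a := _) ((A⁻¹ : GL (Fin 2) ℤ) : Matrix (Fin 2) (Fin 2) ℤ).det ?_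
      rw [← Matrix.det_mul]
      simp
    rcases Int.isUnit_iff.mp hunit with h1 | h1
    · exact h1
    · exfalso
      apply h
      refine ⟨(lam.val : ℤ), ?_⟩
      rw [← ZMod.intCast_zmod_eq_zero_iff_dvd]
      have hd2 : (((A : Matrix (Fin 2) (Fin 2) ℤ).det : ℤ) : ZMod n) = lam ^ 2 := by
        have := RingHom.map_det (Int.castRingHom (ZMod n)) (A : Matrix (Fin 2) (Fin 2) ℤ)
        rw [RingHom.mapMatrix_apply] at this
        have hd : ((A : Matrix (Fin 2) (Fin 2) ℤ).map (Int.cast : ℤ → ZMod n)).det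
            = lam ^ 2 := by
          rw [hlam, Matrix.det_smul, Matrix.det_one]
          simp [Fintype.card_fin]
        simp only [eq_intCast, Int.coe_castRingHom] at this
        rw [this]
        exact hd
      rw [h1] at hd2
      push_cast
      rw [ZMod.natCast_val, ZMod.cast_id, ← hd2]
      push_cast
      ring
end

section
/- Let k, l be nonzero integers and α = (a b; c d) ∈ GL_2(ℤ) with det α = ±1. Define P_α := ((a², 2ab, (-k/l)b²), (ac, ad+bc, (-k/l)bd), ((-l/k)c², (-l/k)2cd, d²)) and Q := ((0,0,k),(0,2l,0),(k,0,0)). Then P_αᵀ · Q · P_α = Q. -/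
open Matrix

/-- For nonzero integers `k, l` and `α = (a b; c d) ∈ GL_2(ℤ)` with `det α = ±1`,
the matrix `P_α` preserves the Gram matrix `Q` of `U(k) ⊕ ⟨2l⟩`:
`P_αᵀ · Q · P_α = Q`. -/
theorem stmt_14 (k l : ℤ) (hk : k ≠ 0) (hl : l ≠ 0) (a b c d : ℤ)
    (h : a * d - b * c = 1 ∨ a * d - b * c = -1) :
    (!![(a : ℚ) ^ 2, 2 * a * b, (-(k : ℚ) / l) * b ^ 2;
        (a : ℚ) * c, a * d + b * c, (-(k : ℚ) / l) * (b * d);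
        (-(l : ℚ) / k) * c ^ 2, (-(l : ℚ) / k) * (2 * c * d), (d : ℚ) ^ 2])ᵀ *
      !![(0 : ℚ), 0, k; 0, 2 * l, 0; k, 0, 0] *
      !![(a : ℚ) ^ 2, 2 * a * b, (-(k : ℚ) / l) * b ^ 2;
        (a : ℚ) * c, a * d + b * c, (-(k : ℚ) / l) * (b * d);
        (-(l : ℚ) / k) * c ^ 2, (-(l : ℚ) / k) * (2 * c * d), (d : ℚ) ^ 2] =
      !![(0 : ℚ), 0, k; 0, 2 * l, 0; k, 0, 0] := by
  have hkq : (k : ℚ) ≠ 0 := Int.cast_ne_zero.mpr hk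
  have hlq : (l : ℚ) ≠ 0 := Int.cast_ne_zero.mpr hl
  have hdet : ((a : ℚ) * d - b * c) ^ 2 = 1 := by
    rcases h with h | h <;>
    · have : ((a : ℚ) * d - b * c) = ((a * d - b * c : ℤ) : ℚ) := by push_cast; ring
      rw [this, h] <;> norm_num
  ext i j
  fin_cases i <;> fin_cases j <;>
    simp [Matrix.mul_apply, Fin.sum_univ_three, Matrix.transpose_apply,
      Matrix.cons_val', Matrix.cons_val_zero, Matrix.cons_val_one, Matrix.head_cons,
      Matrix.empty_val', Matrix.cons_val_fin_one, Matrix.vecHead, Matrix.vecTail] <;>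
    field_simp
  all_goals try ring
  · linear_combination (1 : ℚ) * hdet
  · linear_combination (1 : ℚ) * hdet
  · linear_combination (1 : ℚ) * hdet
end

section
/- Let k, l be nonzero integers. The lattice with Gram matrix (1/2)·((0,0,k),(0,2l,0),(k,0,0)), i.e., the quadratic form (x,y,z) ↦ kxz + ly², represents ε ∈ {1, -1} over ℤ if and only if gcd(k,l) = 1 and εl is a quadratic residue modulo k. -/
/-!
Modulo `k` the form `kxz + ly²` reduces to `ly²`, and every residue `ε - ly²` divisible by `k`
is attained by `x = 1`. So `ε` is represented iff `l y² = ε` is solvable in `R ⧸ (k)`. Since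
`ε² = 1`, such a `y` makes `l` a unit with `εl = (εly)²`; conversely, if `lm = 1` and
`εl = ξ²`, then `y = ξm` works. Finally, `l` is a unit modulo `k` exactly when `k` and `l` are
coprime.
-/

theorem exists_mul_sq_eq_iff_isUnit_and_isSquare {M : Type*} [CommMonoid M] {ε l : M}
    (hε : ε * ε = 1) : (∃ y, l * y ^ 2 = ε) ↔ IsUnit l ∧ IsSquare (ε * l) := by
  constructor
  · rintro ⟨y, hy⟩
    have hy' : ε * l * y ^ 2 = 1 := by rw [mul_assoc, hy, hε]
    refine ⟨.of_mul_eq_one (ε * y ^ 2) (by rw [← hy']; ac_rfl), ε * l * y, ?_⟩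
    calc ε * l = ε * l * (ε * l * y ^ 2) := by rw [hy', mul_one]
      _ = ε * l * y * (ε * l * y) := by rw [sq]; ac_rfl
  · rintro ⟨hl, ξ, hξ⟩
    obtain ⟨m, hm⟩ := hl.exists_right_inv
    refine ⟨ξ * m, ?_⟩
    calc l * (ξ * m) ^ 2 = (ξ * ξ) * (l * m) * m := by rw [sq]; ac_rfl
      _ = ε := by rw [← hξ, hm, mul_one, mul_assoc, hm, mul_one]

namespace Ideal.Quotient

variable {R : Type*} [CommRing R] (k : R)

theorem isUnit_mk_span_singleton_iff {l : R} :
    IsUnit (mk (span {k}) l) ↔ IsCoprime k l := by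
  rw [isUnit_iff_exists_inv, mk_surjective.exists]
  simp only [← map_mul, ← map_one (mk (span {k})), mk_eq_mk_iff_sub_mem, mem_span_singleton]
  constructor
  · rintro ⟨b, c, hc⟩
    exact ⟨-c, b, by linear_combination hc⟩
  · rintro ⟨a, b, hab⟩
    exact ⟨b, -a, by linear_combination hab⟩

theorem isSquare_mk_span_singleton_iff {a : R} :
    IsSquare (mk (span {k}) a) ↔ ∃ ξ, k ∣ a - ξ ^ 2 := by
  simp only [IsSquare, mk_surjective.exists, ← map_mul, mk_eq_mk_iff_sub_mem, mem_span_singleton,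
    sq]

theorem exists_mul_mul_add_eq_iff_mk_eq {c ε : R} :
    (∃ x z, k * x * z + c = ε) ↔ mk (span {k}) c = mk (span {k}) ε := by
  rw [eq_comm, mk_eq_mk_iff_sub_mem, mem_span_singleton]
  constructor
  · rintro ⟨x, z, h⟩
    exact ⟨x * z, by linear_combination -h⟩
  · rintro ⟨z, hz⟩
    exact ⟨1, z, by linear_combination -hz⟩

end Ideal.Quotient

open Ideal Ideal.Quotient in
theorem exists_mul_mul_add_mul_sq_eq_iff {R : Type*} [CommRing R] {k l ε : R}
    (hε : ε * ε = 1) :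
    (∃ x y z, k * x * z + l * y ^ 2 = ε) ↔ IsCoprime k l ∧ ∃ ξ, k ∣ ε * l - ξ ^ 2 := by
  have hε' : mk (span {k}) ε * mk (span {k}) ε = 1 := by rw [← map_mul, hε, map_one]
  rw [← isUnit_mk_span_singleton_iff, ← isSquare_mk_span_singleton_iff, map_mul,
    ← exists_mul_sq_eq_iff_isUnit_and_isSquare hε', mk_surjective.exists, exists_comm]
  simp only [exists_mul_mul_add_eq_iff_mk_eq, map_mul, map_pow]

theorem stmt_16_general (k l : ℤ) (ε : ℤ) (hε : ε = 1 ∨ ε = -1) :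
    (∃ x y z : ℤ, k * x * z + l * y ^ 2 = ε) ↔
    (IsCoprime k l ∧ ∃ ξ : ℤ, k ∣ (ε * l - ξ ^ 2)) :=
  exists_mul_mul_add_mul_sq_eq_iff (by rcases hε with rfl | rfl <;> norm_num)

/-- For nonzero integers `k, l` and `ε = ±1`, the quadratic form
`(x,y,z) ↦ kxz + ly²` represents `ε` over `ℤ` if and only if `gcd(k,l) = 1` and
`εl` is a quadratic residue modulo `k`. -/
theorem stmt_16 (k l : ℤ) (hk : k ≠ 0) (hl : l ≠ 0) (ε : ℤ) (hε : ε = 1 ∨ ε = -1) :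
    (∃ x y z : ℤ, k * x * z + l * y ^ 2 = ε) ↔
    (IsCoprime k l ∧ ∃ ξ : ℤ, k ∣ (ε * l - ξ ^ 2)) :=
  stmt_16_general k l ε hε
end

section
/- For L₀ the quadratic form 3x² - 5y² - 9z² on ℤ³, there are no integers x, y, z with 3x² - 5y² - 9z² = ±1, yet the quadratic form 3x² - 5y² - 9z² + 135w² takes the value 1 at (x,y,z,w) = (0,5,1,1). -/
/-- The ternary form `3x² - 5y² - 9z²` represents neither `1` nor `-1` over `ℤ`,
but the quaternary form `3x² - 5y² - 9z² + 135w²` represents `1`, at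
`(x,y,z,w) = (0,5,1,1)`. -/
theorem stmt_17 :
    (¬ ∃ x y z : ℤ, 3 * x ^ 2 - 5 * y ^ 2 - 9 * z ^ 2 = 1) ∧
    (¬ ∃ x y z : ℤ, 3 * x ^ 2 - 5 * y ^ 2 - 9 * z ^ 2 = -1) ∧
    (3 * (0 : ℤ) ^ 2 - 5 * (5 : ℤ) ^ 2 - 9 * (1 : ℤ) ^ 2 + 135 * (1 : ℤ) ^ 2 = 1) := by
  refine ⟨?_, ?_, by norm_num⟩
  · rintro ⟨x, y, z, h⟩
    have h8 : (3 * (x : ZMod 8) ^ 2 - 5 * y ^ 2 - 9 * z ^ 2 = 1) := by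
      have := congrArg (Int.cast : ℤ → ZMod 8) h
      push_cast at this
      exact this
    revert h8
    generalize (x : ZMod 8) = a
    generalize (y : ZMod 8) = b
    generalize (z : ZMod 8) = c
    revert a b c
    decide
  · rintro ⟨x, y, z, h⟩
    have h3 : (3 * (x : ZMod 3) ^ 2 - 5 * y ^ 2 - 9 * z ^ 2 = -1) := by
      have := congrArg (Int.cast : ℤ → ZMod 3) h
      push_cast at this
      exact this
    revert h3
    generalize (x : ZMod 3) = a
    generalize (y : ZMod 3) = b
    generalize (z : ZMod 3) = c
    revert a b c
    decide
end
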